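/- arXiv:2112.00080 — 2 statements merged into one kernel-verified Lean document; each statement's English description precedes it below -/
import Mathlib

section
/- Let H be a Hilbert space, d > 0, α ∈ (0,1), and let u be sufficiently smooth with u'(0) = u₁ ∈ H. Then ∫₀ᵗ ⟨d(∂_s ∂_s^{1+α} u(s) − s^{−α} u₂/Γ(1−α)), ∂_s^{1+α} u(s)⟩ ds ≥ (d/2)‖∂_t^{1+α} u(t)‖² − d t^{2(1−α)} ‖u₂‖²/Γ(2−α)² − (d/4) sup_{s∈(0,t)} ‖∂_s^{1+α} u(s)‖², where u₂ = u''(0). -/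
open MeasureTheory Real Set

/-- Riemann–Liouville fractional integral of order `θ` on `(0,t)`. -/
noncomputable def RL (θ : ℝ) (w : ℝ → ℝ) (t : ℝ) : ℝ :=
  (Real.Gamma θ)⁻¹ * ∫ s in (0:ℝ)..t, (t - s) ^ (θ - 1) * w s

/-- Riemann–Liouville integral, with order `0` interpreted as the identity. -/
noncomputable def RLI (θ : ℝ) (w : ℝ → ℝ) : ℝ → ℝ :=
  if θ = 0 then w else RL θ w

/-- Caputo (Djrbashian–Caputo) fractional derivative of order `β ≥ 0`:
`∂_t^β w = ₀I_t^{⌈β⌉−β} (w^{(⌈β⌉)})`, with integer orders as classical derivatives. -/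
noncomputable def cap (β : ℝ) (w : ℝ → ℝ) : ℝ → ℝ :=
  if β = (⌈β⌉ : ℝ) then deriv^[(⌈β⌉).toNat] w
  else RL ((⌈β⌉ : ℝ) - β) (deriv^[(⌈β⌉).toNat] w)

/-- `L²(0,t)` norm. -/
noncomputable def L2norm (t : ℝ) (w : ℝ → ℝ) : ℝ :=
  (∫ s in (0:ℝ)..t, (w s)^2) ^ (1/2 : ℝ)

/-- Membership in `L²(0,t)`. -/
def MemL2 (t : ℝ) (w : ℝ → ℝ) : Prop :=
  MemLp w 2 (volume.restrict (Set.Ioo 0 t))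

/-- Gagliardo (Sobolev–Slobodeckij) double integral seminorm (squared). -/
noncomputable def gagliardo (θ t : ℝ) (w : ℝ → ℝ) : ℝ :=
  ∫ p in (Set.Ioo (0:ℝ) t) ×ˢ (Set.Ioo (0:ℝ) t),
    (w p.1 - w p.2)^2 / |p.1 - p.2| ^ (1 + 2*θ)

/-- `H^θ(0,t)` norm for `θ ∈ [0,1)`. -/
noncomputable def Hnorm (θ t : ℝ) (w : ℝ → ℝ) : ℝ :=
  if θ = 0 then L2norm t w
  else ((L2norm t w)^2 + gagliardo θ t w) ^ (1/2 : ℝ)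

/-- Membership in `H^θ(0,t)` for `θ ∈ [0,1)`. -/
def MemH (θ t : ℝ) (w : ℝ → ℝ) : Prop :=
  MemL2 t w ∧ (θ ≠ 0 → Integrable
    (fun p : ℝ × ℝ => (w p.1 - w p.2)^2 / |p.1 - p.2| ^ (1 + 2*θ))
    (volume.restrict ((Set.Ioo (0:ℝ) t) ×ˢ (Set.Ioo (0:ℝ) t))))

/-- Dual norm of `H^{-θ}(0,t)`, realized as the dual of `H^θ(0,t)` with `L²` pivot. -/
noncomputable def Hneg (θ t : ℝ) (w : ℝ → ℝ) : ℝ :=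
  ⨆ φ : {φ : ℝ → ℝ // Hnorm θ t φ ≤ 1}, ∫ s in (0:ℝ)..t, w s * φ.1 s

variable {H : Type*} [NormedAddCommGroup H] [NormedSpace ℝ H]

/-- Vector-valued Riemann–Liouville fractional integral. -/
noncomputable def RLv (θ : ℝ) (w : ℝ → H) (t : ℝ) : H :=
  (Real.Gamma θ)⁻¹ • ∫ s in (0:ℝ)..t, ((t - s) ^ (θ - 1)) • w s

/-- Vector-valued Riemann–Liouville integral with order `0` as identity. -/
noncomputable def RLIv (θ : ℝ) (w : ℝ → H) : ℝ → H :=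
  if θ = 0 then w else RLv θ w

/-- Vector-valued Caputo fractional derivative of order `β ≥ 0`. -/
noncomputable def capv (β : ℝ) (w : ℝ → H) : ℝ → H :=
  if β = (⌈β⌉ : ℝ) then deriv^[(⌈β⌉).toNat] w
  else RLv ((⌈β⌉ : ℝ) - β) (deriv^[(⌈β⌉).toNat] w)

/-- `L²(0,t;H)` norm. -/
noncomputable def L2normV (t : ℝ) (w : ℝ → H) : ℝ :=
  (∫ s in (0:ℝ)..t, ‖w s‖^2) ^ (1/2 : ℝ)

/-- Vector-valued Gagliardo seminorm (squared). -/
noncomputable def gagliardoV (θ t : ℝ) (w : ℝ → H) : ℝ :=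
  ∫ p in (Set.Ioo (0:ℝ) t) ×ˢ (Set.Ioo (0:ℝ) t),
    ‖w p.1 - w p.2‖^2 / |p.1 - p.2| ^ (1 + 2*θ)

/-- Fractional Sobolev–Bochner norm `H^s(0,t;H)`, `s ≥ 0`. -/
noncomputable def HnormV (s t : ℝ) (w : ℝ → H) : ℝ :=
  if s = (⌊s⌋ : ℝ) then
    (∑ k ∈ Finset.range ((⌊s⌋).toNat + 1), (L2normV t (deriv^[k] w))^2) ^ (1/2 : ℝ)
  else
    ((∑ k ∈ Finset.range ((⌊s⌋).toNat + 1), (L2normV t (deriv^[k] w))^2)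
      + gagliardoV (s - ⌊s⌋) t (deriv^[(⌊s⌋).toNat] w)) ^ (1/2 : ℝ)

/-- Membership in `H^s(0,t;H)`. -/
def MemHV (s t : ℝ) (w : ℝ → H) : Prop :=
  (∀ k ≤ (⌊s⌋).toNat, MemLp (deriv^[k] w) 2 (volume.restrict (Set.Ioo (0:ℝ) t))) ∧
  (s ≠ (⌊s⌋ : ℝ) → Integrable
    (fun p : ℝ × ℝ => ‖deriv^[(⌊s⌋).toNat] w p.1 - deriv^[(⌊s⌋).toNat] w p.2‖^2
      / |p.1 - p.2| ^ (1 + 2*(s - ⌊s⌋)))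
    (volume.restrict ((Set.Ioo (0:ℝ) t) ×ˢ (Set.Ioo (0:ℝ) t))))

/-!
Put `V = ∂^{1+α} u = I^{1-α} u''`. The substitution `r = sσ` in the Riemann–Liouville integral
gives `V s = Γ(1-α)⁻¹ s^{1-α} Φ(s)` with `Φ = rlProfile (1-α) u''` of class `C¹`, so `V` is
continuous on `[0, t]`, vanishes at `0`, and `V' = O(s^{-α})` is integrable. Hence
`∫₀ᵗ ⟨V', V⟩ = ‖V t‖² / 2`, while the source term is at most
`‖u₂‖ (sup ‖V‖) t^{1-α} / Γ(2-α)`, since `∫₀ᵗ s^{-α} = t^{1-α} / (1-α)` and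
`Γ(2-α) = (1-α) Γ(1-α)`; Young's inequality `ab ≤ a² + b²/4` finishes.
-/

open intervalIntegral
open scoped Interval

section RiemannLiouville

lemma intervalIntegrable_one_sub_rpow {p : ℝ} (hp : -1 < p) :
    IntervalIntegrable (fun σ : ℝ => (1 - σ) ^ p) volume 0 1 := by
  simpa using ((intervalIntegrable_rpow' (a := 0) (b := 1) hp).comp_sub_left 1).symm

lemma exists_norm_comp_mul_le {E : Type*} [NormedAddCommGroup E] {g : ℝ → E} (hg : Continuous g)
    (x₀ : ℝ) :
    ∃ M, ∀ x ∈ Metric.ball x₀ 1, ∀ σ ∈ Ι (0:ℝ) 1, ‖g (x * σ)‖ ≤ M := by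
  obtain ⟨M, hM⟩ := (isCompact_closedBall (0:ℝ) (|x₀| + 1)).exists_bound_of_continuousOn
    hg.continuousOn
  refine ⟨M, fun x hx σ hσ => hM _ ?_⟩
  rw [uIoc_of_le zero_le_one] at hσ
  rw [Metric.mem_ball, Real.dist_eq] at hx
  have hx' : |x| ≤ |x₀| + 1 := by linarith [abs_sub_abs_le_abs_sub x x₀]
  rw [mem_closedBall_zero_iff, Real.norm_eq_abs, abs_mul, abs_of_pos hσ.1]
  linarith [mul_le_of_le_one_right (abs_nonneg x) hσ.2]

variable {k : ℝ → ℝ}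

lemma continuous_integral_smul_comp_mul (hk : IntervalIntegrable k volume 0 1) {g : ℝ → H}
    (hg : Continuous g) : Continuous fun x => ∫ σ in (0:ℝ)..1, k σ • g (x * σ) := by
  refine continuous_iff_continuousAt.2 fun x₀ => ?_
  obtain ⟨M, hM⟩ := exists_norm_comp_mul_le hg x₀
  refine continuousAt_of_dominated_interval (bound := fun σ => ‖k σ‖ * M)
    (Filter.Eventually.of_forall fun x => ?_) ?_ (hk.norm.mul_const M) ?_
  · exact hk.def'.aestronglyMeasurable.smul
      (hg.comp (continuous_const.mul continuous_id)).aestronglyMeasurable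
  · filter_upwards [Metric.ball_mem_nhds x₀ one_pos] with x hx
    refine Filter.Eventually.of_forall fun σ hσ => ?_
    rw [norm_smul]
    exact mul_le_mul_of_nonneg_left (hM x hx σ hσ) (norm_nonneg _)
  · exact Filter.Eventually.of_forall fun σ _ =>
      (continuous_const.smul (hg.comp (continuous_id.mul continuous_const))).continuousAt

lemma hasDerivAt_integral_smul_comp_mul (hk : IntervalIntegrable k volume 0 1) {g : ℝ → H}
    (hg : ContDiff ℝ 1 g) (x₀ : ℝ) :
    HasDerivAt (fun x => ∫ σ in (0:ℝ)..1, k σ • g (x * σ))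
      (∫ σ in (0:ℝ)..1, (k σ * σ) • deriv g (x₀ * σ)) x₀ := by
  have hg' : Continuous (deriv g) := hg.continuous_deriv le_rfl
  obtain ⟨M, hM⟩ := exists_norm_comp_mul_le hg' x₀
  refine (hasDerivAt_integral_of_dominated_loc_of_deriv_le
    (F := fun x σ => k σ • g (x * σ)) (F' := fun x σ => (k σ * σ) • deriv g (x * σ))
    (bound := fun σ => ‖k σ‖ * M)
    (Metric.ball_mem_nhds x₀ one_pos) (Filter.Eventually.of_forall fun x => ?_) ?_ ?_ ?_
    (hk.norm.mul_const M) ?_).2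
  · exact hk.def'.aestronglyMeasurable.smul
      (hg.continuous.comp (continuous_const.mul continuous_id)).aestronglyMeasurable
  · exact hk.smul_continuousOn
      (hg.continuous.comp (continuous_const.mul continuous_id)).continuousOn
  · exact (hk.mul_continuousOn continuousOn_id).def'.aestronglyMeasurable.smul
      (hg'.comp (continuous_const.mul continuous_id)).aestronglyMeasurable
  · refine Filter.Eventually.of_forall fun σ hσ x hx => ?_
    have hσ' : σ ∈ Ioc 0 1 := by rwa [uIoc_of_le zero_le_one] at hσ
    rw [norm_smul, norm_mul, Real.norm_of_nonneg hσ'.1.le, mul_assoc]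
    refine mul_le_mul_of_nonneg_left ?_ (norm_nonneg _)
    nlinarith [hM x hx σ hσ, norm_nonneg (deriv g (x * σ)), hσ'.2]
  · refine Filter.Eventually.of_forall fun σ _ x _ => ?_
    have := ((hg.differentiable one_ne_zero (x * σ)).hasDerivAt.scomp x
      (hasDerivAt_mul_const σ)).const_smul (k σ)
    rwa [smul_smul] at this

/-- After the substitution `r = sσ`, `RLv θ w s = Γ(θ)⁻¹ s^θ rlProfile θ w s` for `s ≥ 0`.
Unlike `RLv θ w`, the profile is `C¹` whenever `w` is: the singular factor `s^θ` is split off. -/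
noncomputable def rlProfile (θ : ℝ) (w : ℝ → H) (x : ℝ) : H :=
  ∫ σ in (0:ℝ)..1, (1 - σ) ^ (θ - 1) • w (x * σ)

variable {θ : ℝ} {w : ℝ → H}

lemma contDiff_rlProfile (hθ : 0 < θ) (hw : ContDiff ℝ 1 w) : ContDiff ℝ 1 (rlProfile θ w) := by
  have hk := intervalIntegrable_one_sub_rpow (p := θ - 1) (by linarith)
  have hderiv : deriv (rlProfile θ w) = fun x =>
      ∫ σ in (0:ℝ)..1, ((1 - σ) ^ (θ - 1) * σ) • deriv w (x * σ) :=
    funext fun x => (hasDerivAt_integral_smul_comp_mul hk hw x).deriv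
  refine contDiff_one_iff_deriv.2
    ⟨fun x => (hasDerivAt_integral_smul_comp_mul hk hw x).differentiableAt, ?_⟩
  rw [hderiv]
  exact continuous_integral_smul_comp_mul (hk.mul_continuousOn continuousOn_id)
    (hw.continuous_deriv le_rfl)

lemma RLv_eq_rpow_smul_rlProfile (hθ : θ ≠ 0) (w : ℝ → H) {s : ℝ} (hs : 0 ≤ s) :
    RLv θ w s = (Real.Gamma θ)⁻¹ • s ^ θ • rlProfile θ w s := by
  rcases hs.eq_or_lt with rfl | hs
  · simp [RLv, Real.zero_rpow hθ]
  have hkernel : ∀ σ ∈ uIcc (0:ℝ) 1, s ^ θ • (1 - σ) ^ (θ - 1) • w (s * σ) =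
      s • (s - s * σ) ^ (θ - 1) • w (s * σ) := by
    intro σ hσ
    rw [uIcc_of_le zero_le_one] at hσ
    rw [smul_smul, smul_smul, show s - s * σ = s * (1 - σ) by ring,
      Real.mul_rpow hs.le (by linarith [hσ.2]), ← mul_assoc,
      ← Real.rpow_one_add' hs.le (by simp [hθ])]
    ring_nf
  rw [RLv, rlProfile]
  congr 1
  rw [← intervalIntegral.integral_smul, integral_congr hkernel,
    intervalIntegral.integral_smul,
    integral_comp_mul_left (fun r => (s - r) ^ (θ - 1) • w r) hs.ne', smul_inv_smul₀ hs.ne',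
    mul_zero, mul_one]

lemma continuousOn_RLv (hθ : 0 < θ) (hw : Continuous w) : ContinuousOn (RLv θ w) (Ici 0) := by
  have hΦ : Continuous (rlProfile θ w) :=
    continuous_integral_smul_comp_mul (intervalIntegrable_one_sub_rpow (by linarith)) hw
  refine ContinuousOn.congr (f := fun s => (Real.Gamma θ)⁻¹ • s ^ θ • rlProfile θ w s) ?_
    fun s hs => RLv_eq_rpow_smul_rlProfile hθ.ne' w hs
  exact continuousOn_const.smul ((continuousOn_id.rpow_const fun _ _ => Or.inr hθ.le).smul
    hΦ.continuousOn)

lemma hasDerivAt_RLv (hθ : 0 < θ) (hw : ContDiff ℝ 1 w) {s : ℝ} (hs : 0 < s) :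
    HasDerivAt (RLv θ w) ((Real.Gamma θ)⁻¹ •
      (s ^ θ • deriv (rlProfile θ w) s + (θ * s ^ (θ - 1)) • rlProfile θ w s)) s := by
  have hΦ := (contDiff_rlProfile hθ hw).differentiable one_ne_zero s
  have hV : (fun x => (Real.Gamma θ)⁻¹ • x ^ θ • rlProfile θ w x) =ᶠ[nhds s] RLv θ w :=
    Filter.eventuallyEq_of_mem (Ioi_mem_nhds hs)
      fun x hx => (RLv_eq_rpow_smul_rlProfile hθ.ne' w (le_of_lt hx)).symm
  exact (((Real.hasDerivAt_rpow_const (Or.inl hs.ne')).smul hΦ.hasDerivAt).const_smul _)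
    |>.congr_of_eventuallyEq hV.symm

lemma intervalIntegrable_deriv_RLv (hθ : 0 < θ) (hw : ContDiff ℝ 1 w) {t : ℝ} (ht : 0 ≤ t) :
    IntervalIntegrable (deriv (RLv θ w)) volume 0 t := by
  have hΦ := contDiff_rlProfile hθ hw
  have hint : IntervalIntegrable (fun s => (Real.Gamma θ)⁻¹ •
      (s ^ θ • deriv (rlProfile θ w) s + (θ * s ^ (θ - 1)) • rlProfile θ w s)) volume 0 t := by
    refine ((ContinuousOn.intervalIntegrable ?_).add ?_).smul _
    · exact (continuousOn_id.rpow_const fun _ _ => Or.inr hθ.le).smul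
        (hΦ.continuous_deriv le_rfl).continuousOn
    · exact ((intervalIntegrable_rpow' (by linarith)).const_mul θ).smul_continuousOn
        hΦ.continuous.continuousOn
  refine hint.congr fun s hs => (hasDerivAt_RLv hθ hw ?_).deriv.symm
  rw [uIoc_of_le ht] at hs
  exact hs.1

end RiemannLiouville

lemma capv_one_add {α : ℝ} (hα : α ∈ Ioo (0:ℝ) 1) (u : ℝ → H) :
    capv (1 + α) u = RLv (1 - α) (deriv^[2] u) := by
  have hceil : ⌈(1:ℝ) + α⌉ = 2 := by
    rw [Int.ceil_eq_iff]
    constructor <;> push_cast <;> linarith [hα.1, hα.2]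
  rw [capv, hceil, if_neg (by push_cast; linarith [hα.2])]
  congr 1
  push_cast
  ring

section Energy

variable {E : Type*} [NormedAddCommGroup E] [InnerProductSpace ℝ E]

open scoped RealInnerProductSpace

lemma IntervalIntegrable.inner_continuousOn {f g : ℝ → E} {a b : ℝ}
    (hf : IntervalIntegrable f volume a b) (hg : ContinuousOn g (uIcc a b)) :
    IntervalIntegrable (fun s => ⟪f s, g s⟫) volume a b := by
  obtain ⟨M, hM⟩ := isCompact_uIcc.exists_bound_of_continuousOn hg
  refine (hf.norm.mul_const M).mono_fun' (hf.def'.aestronglyMeasurable.inner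
    ((hg.mono uIoc_subset_uIcc).aestronglyMeasurable measurableSet_uIoc)) ?_
  filter_upwards [ae_restrict_mem measurableSet_uIoc] with s hs
  exact (norm_inner_le_norm _ _).trans
    (mul_le_mul_of_nonneg_left (hM s (uIoc_subset_uIcc hs)) (norm_nonneg _))

lemma integral_inner_deriv_self {V : ℝ → E} {a b : ℝ} (hab : a ≤ b)
    (hc : ContinuousOn V (Icc a b)) (hd : ∀ s ∈ Ioo a b, DifferentiableAt ℝ V s)
    (hi : IntervalIntegrable (deriv V) volume a b) :
    ∫ s in a..b, ⟪deriv V s, V s⟫ = ‖V b‖ ^ 2 / 2 - ‖V a‖ ^ 2 / 2 := by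
  refine integral_eq_sub_of_hasDerivAt_of_le hab
    (((continuous_norm.comp_continuousOn hc).pow 2).div_const 2) (fun s hs => ?_)
    (hi.inner_continuousOn (by rwa [uIcc_of_le hab]))
  exact ((hd s hs).hasDerivAt.norm_sq.div_const 2).congr_deriv (by rw [real_inner_comm]; ring)

lemma norm_le_sqrt_biSup_sq_norm {ι F : Type*} [SeminormedAddGroup F] {V : ι → F} {A : Set ι}
    (hV : BddAbove ((‖V ·‖) '' A)) {s : ι} (hs : s ∈ A) :
    ‖V s‖ ≤ √(⨆ i ∈ A, ‖V i‖ ^ 2) := by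
  obtain ⟨M, hM⟩ := hV
  refine Real.le_sqrt_of_sq_le
    (le_ciSup₂ (f := fun i (_ : i ∈ A) => ‖V i‖ ^ 2) ⟨M ^ 2, ?_⟩ s hs)
  simp only [mem_upperBounds, mem_iUnion, mem_range]
  rintro _ ⟨i, hi, rfl⟩
  have := hM (mem_image_of_mem _ hi)
  gcongr

lemma integral_rpow_mul_inner_le {V : ℝ → E} {α t S : ℝ} (hα : α < 1) (ht : 0 ≤ t) (u : E)
    (hV : ContinuousOn V (uIcc 0 t)) (hS : ∀ s ∈ Ioo 0 t, ‖V s‖ ≤ S) :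
    ∫ s in (0:ℝ)..t, s ^ (-α) * ⟪u, V s⟫ ≤ t ^ (1 - α) / (1 - α) * (‖u‖ * S) := by
  have hrpow : IntervalIntegrable (fun s : ℝ => s ^ (-α)) volume 0 t :=
    intervalIntegrable_rpow' (by linarith)
  calc ∫ s in (0:ℝ)..t, s ^ (-α) * ⟪u, V s⟫ ≤ ∫ s in (0:ℝ)..t, s ^ (-α) * (‖u‖ * S) := by
        refine integral_mono_on_of_le_Ioo ht
          (hrpow.mul_continuousOn (continuousOn_const.inner hV)) (hrpow.mul_const _) fun s hs => ?_
        refine mul_le_mul_of_nonneg_left ?_ (Real.rpow_nonneg hs.1.le _)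
        exact (real_inner_le_norm _ _).trans
          (mul_le_mul_of_nonneg_left (hS s hs) (norm_nonneg _))
    _ = t ^ (1 - α) / (1 - α) * (‖u‖ * S) := by
        rw [intervalIntegral.integral_mul_const, integral_rpow (Or.inl (by linarith)),
          Real.zero_rpow (by linarith), sub_zero, neg_add_eq_sub]

lemma integral_rpow_mul_inner_div_Gamma_le {V : ℝ → E} {α t : ℝ} (hα : α < 1) (ht : 0 ≤ t)
    (u : E) (hc : ContinuousOn V (Icc 0 t)) :
    (∫ s in (0:ℝ)..t, s ^ (-α) * ⟪u, V s⟫) / Real.Gamma (1 - α) ≤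
      t ^ (2 * (1 - α)) * ‖u‖ ^ 2 / Real.Gamma (2 - α) ^ 2 + (⨆ s ∈ Ioo 0 t, ‖V s‖ ^ 2) / 4 := by
  have hΓ₁ : 0 < Real.Gamma (1 - α) := Real.Gamma_pos_of_pos (by linarith)
  have hΓ₂ : Real.Gamma (2 - α) = (1 - α) * Real.Gamma (1 - α) := by
    rw [← Real.Gamma_add_one (by linarith)]
    ring_nf
  have hbdd : BddAbove ((‖V ·‖) '' Ioo 0 t) :=
    (isCompact_Icc.image_of_continuousOn (continuous_norm.comp_continuousOn hc)).bddAbove.mono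
      (image_mono Ioo_subset_Icc_self)
  set S := √(⨆ s ∈ Ioo 0 t, ‖V s‖ ^ 2)
  have hS : S ^ 2 = ⨆ s ∈ Ioo 0 t, ‖V s‖ ^ 2 :=
    Real.sq_sqrt (Real.iSup_nonneg fun s => Real.iSup_nonneg fun _ => sq_nonneg _)
  set K := t ^ (1 - α) / Real.Gamma (2 - α)
  have hK : K ^ 2 = t ^ (2 * (1 - α)) / Real.Gamma (2 - α) ^ 2 := by
    rw [div_pow, ← Real.rpow_natCast, ← Real.rpow_mul ht]
    ring_nf
  calc (∫ s in (0:ℝ)..t, s ^ (-α) * ⟪u, V s⟫) / Real.Gamma (1 - α)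
      ≤ t ^ (1 - α) / (1 - α) * (‖u‖ * S) / Real.Gamma (1 - α) := by
        gcongr
        exact integral_rpow_mul_inner_le hα ht u (by rwa [uIcc_of_le ht])
          fun s hs => norm_le_sqrt_biSup_sq_norm hbdd hs
    _ = K * (‖u‖ * S) := by
        simp only [K, hΓ₂]
        field_simp
    _ ≤ K ^ 2 * ‖u‖ ^ 2 + S ^ 2 / 4 := by nlinarith [sq_nonneg (K * ‖u‖ - S / 2)]
    _ = _ := by rw [hK, hS]; ring

theorem integral_inner_deriv_sub_rpow_smul_ge {V : ℝ → E} {d α t : ℝ} (hd : 0 < d)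
    (hα : α < 1) (ht : 0 ≤ t) (u₂ : E) (hc : ContinuousOn V (Icc 0 t)) (h0 : V 0 = 0)
    (hdiff : ∀ s ∈ Ioo 0 t, DifferentiableAt ℝ V s)
    (hi : IntervalIntegrable (deriv V) volume 0 t) :
    ∫ s in (0:ℝ)..t, ⟪d • (deriv V s - (s ^ (-α) / Real.Gamma (1 - α)) • u₂), V s⟫ ≥
      d / 2 * ‖V t‖ ^ 2 - d * t ^ (2 * (1 - α)) * ‖u₂‖ ^ 2 / Real.Gamma (2 - α) ^ 2
        - d / 4 * ⨆ s ∈ Ioo 0 t, ‖V s‖ ^ 2 := by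
  have hc' : ContinuousOn V (uIcc 0 t) := by rwa [uIcc_of_le ht]
  have hI₁ := hi.inner_continuousOn hc'
  have hI₂ := (intervalIntegrable_rpow' (r := -α) (by linarith)).mul_continuousOn
    (continuousOn_const.inner (f := fun _ => u₂) hc')
  have hsplit : ∫ s in (0:ℝ)..t, ⟪d • (deriv V s - (s ^ (-α) / Real.Gamma (1 - α)) • u₂), V s⟫
      = d * (∫ s in (0:ℝ)..t, ⟪deriv V s, V s⟫)
        - d * ((∫ s in (0:ℝ)..t, s ^ (-α) * ⟪u₂, V s⟫) / Real.Gamma (1 - α)) := by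
    rw [div_eq_mul_inv, mul_comm _ (Real.Gamma (1 - α))⁻¹,
      ← intervalIntegral.integral_const_mul, ← intervalIntegral.integral_const_mul,
      ← intervalIntegral.integral_const_mul,
      ← intervalIntegral.integral_sub (hI₁.const_mul _) ((hI₂.const_mul _).const_mul _)]
    refine integral_congr fun s _ => ?_
    simp only [inner_smul_left, inner_sub_left, RCLike.conj_to_real]
    ring
  have hsource :=
    mul_le_mul_of_nonneg_left (integral_rpow_mul_inner_div_Gamma_le hα ht u₂ hc) hd.le
  rw [hsplit, integral_inner_deriv_self ht hc hdiff hi, h0, norm_zero]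
  linear_combination hsource

end Energy

open scoped RealInnerProductSpace in
theorem energy_testing_lower_bound_general {H : Type*} [NormedAddCommGroup H]
    [InnerProductSpace ℝ H]
    (d α t : ℝ) (hd : 0 < d) (hα : α ∈ Set.Ioo (0:ℝ) 1) (ht : 0 < t)
    (u : ℝ → H) (hu : ContDiff ℝ 3 u) (u₂ : H) :
    (∫ s in (0:ℝ)..t,
        ⟪d • (deriv (capv (1+α) u) s - (s^(-α) / Real.Gamma (1-α)) • u₂),
          capv (1+α) u s⟫) ≥
      d/2 * ‖capv (1+α) u t‖^2
        - d * t^(2*(1-α)) * ‖u₂‖^2 / (Real.Gamma (2-α))^2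
        - d/4 * ⨆ s ∈ Set.Ioo (0:ℝ) t, ‖capv (1+α) u s‖^2 := by
  have hθ : 0 < 1 - α := by linarith [hα.2]
  have hw : ContDiff ℝ 1 (deriv^[2] u) := hu.iterate_deriv' 1 2
  rw [capv_one_add hα]
  exact integral_inner_deriv_sub_rpow_smul_ge hd hα.2 ht.le u₂
    ((continuousOn_RLv hθ hw.continuous).mono Icc_subset_Ici_self) (by simp [RLv])
    (fun s hs => (hasDerivAt_RLv hθ hw hs.1).differentiableAt)
    (intervalIntegrable_deriv_RLv hθ hw ht.le)

open scoped RealInnerProductSpace in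
/-- Lower bound for the leading-order testing term: in a Hilbert space `H`, for `d > 0`,
`α ∈ (0,1)` and sufficiently smooth `u` with `u'(0) = u₁`, `u''(0) = u₂`,
`∫₀ᵗ ⟨d(∂_s ∂_s^{1+α}u − s^{-α}u₂/Γ(1-α)), ∂_s^{1+α}u⟩ ds ≥ (d/2)‖∂_t^{1+α}u(t)‖²
 − d t^{2(1-α)}‖u₂‖²/Γ(2-α)² − (d/4) sup_{s∈(0,t)}‖∂_s^{1+α}u(s)‖²`. -/
theorem energy_testing_lower_bound {H : Type*} [NormedAddCommGroup H]
    [InnerProductSpace ℝ H] [CompleteSpace H]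
    (d α t : ℝ) (hd : 0 < d) (hα : α ∈ Set.Ioo (0:ℝ) 1) (ht : 0 < t)
    (u : ℝ → H) (hu : ContDiff ℝ 3 u) (u₁ u₂ : H)
    (h1 : deriv u 0 = u₁) (h2 : deriv^[2] u 0 = u₂) :
    (∫ s in (0:ℝ)..t,
        ⟪d • (deriv (capv (1+α) u) s - (s^(-α) / Real.Gamma (1-α)) • u₂),
          capv (1+α) u s⟫) ≥
      d/2 * ‖capv (1+α) u t‖^2
        - d * t^(2*(1-α)) * ‖u₂‖^2 / (Real.Gamma (2-α))^2
        - d/4 * ⨆ s ∈ Set.Ioo (0:ℝ) t, ‖capv (1+α) u s‖^2 :=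
  energy_testing_lower_bound_general d α t hd hα ht u hu u₂
end

section
/- Let H be a Hilbert space, b > 0, α ∈ (0,1), and u with ∂_t^α Ã^{1/2}u(0) = 0 and sufficient regularity. Then sup_{t'∈(0,t)} ∫₀^{t'} ⟨b ∂_s^α Ã^{1/2}u(s), ∂_s^{1+α} Ã^{1/2}u(s)⟩ ds ≥ (b/4)·sup_{s∈(0,t)} ‖∂_s^α Ã^{1/2}u(s)‖² − t^{2(1−α)} b ‖Ã^{1/2}u'(0)‖²/Γ(2−α)². -/
open MeasureTheory Real Set

variable {H : Type*} [NormedAddCommGroup H] [NormedSpace ℝ H]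

/-! With `β = 1 - α` and `w = S ∘ u`, `v = ∂^α w` and `D = ∂^{1+α} w` are Riemann–Liouville
integrals `I^β` of `w'` and `w''`. Integrating by parts, `v s = s^β w'(0) / Γ(β+1) + I^{β+1} w'' s`,
and by Fubini `∫₀^s I^β f = I^{β+1} f s`; hence `v(0) = 0` and on `(0, t)`
`v' = D + s^{β-1} w'(0) / Γ(β)`, the identity `∂^{1+α} = ∂_t ∂^α - t^{-α} w'(0) / Γ(1-α)`.
Differentiating `‖v‖²`,
`∫₀^{t'} ⟪v, D⟫ = ‖v t'‖² / 2 - Γ(β)⁻¹ ∫₀^{t'} s^{β-1} ⟪v s, w'(0)⟫`, and with `A = sup ‖v‖²` the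
last integral is at most `√A · ε ≤ A / 4 + ε²`, `ε = ‖w'(0)‖ t^β / Γ(β+1)`. Taking the supremum
over `t'` of `‖v t'‖² / 2 - A / 4 - ε²` absorbs `A / 4` into `A / 2`. -/

open intervalIntegral Function

section RiemannLiouville

variable {E : Type*} [NormedAddCommGroup E] [NormedSpace ℝ E]

theorem integral_integral_swap_triangle {G : ℝ → ℝ → E} {s : ℝ} (hs : 0 ≤ s)
    (hG : IntegrableOn (uncurry G) (Ioc 0 s ×ˢ Ioc 0 s)) :
    ∫ σ in 0..s, ∫ ρ in 0..σ, G σ ρ = ∫ ρ in 0..s, ∫ σ in ρ..s, G σ ρ := by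
  set T := {p : ℝ × ℝ | p.2 ≤ p.1}
  have hswap := intervalIntegral_intervalIntegral_swap
    (F := fun σ ρ => T.indicator (uncurry G) (σ, ρ)) (a := 0) (b := s) (c := 0) (d := s)
    (by rw [uIoc_of_le hs]; exact hG.indicator (measurableSet_le measurable_snd measurable_fst))
  have hleft : ∀ σ ∈ uIcc 0 s,
      ∫ ρ in 0..s, T.indicator (uncurry G) (σ, ρ) = ∫ ρ in 0..σ, G σ ρ := by
    intro σ hσ
    rw [uIcc_of_le hs] at hσ
    rw [← integral_indicator hσ]
    congr 1 with ρ
  have hright : ∀ᵐ ρ, ρ ∈ uIoc 0 s →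
      ∫ σ in 0..s, T.indicator (uncurry G) (σ, ρ) = ∫ σ in ρ..s, G σ ρ := by
    refine Filter.Eventually.of_forall fun ρ hρ => ?_
    rw [uIoc_of_le hs] at hρ
    have hind : (fun σ => T.indicator (uncurry G) (σ, ρ)) = (Ici ρ).indicator (G · ρ) := by
      ext σ
      simp [T, indicator_apply]
    have hset : Ioc 0 s ∩ Ici ρ = Icc ρ s := Set.ext fun σ =>
      ⟨fun h => ⟨h.2, h.1.2⟩, fun h => ⟨⟨hρ.1.trans_le h.1, h.2⟩, h.1⟩⟩
    rw [hind, integral_of_le hs, integral_of_le hρ.2, setIntegral_indicator measurableSet_Ici,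
      hset, integral_Icc_eq_integral_Ioc]
  rw [← integral_congr hleft, hswap, integral_congr_ae hright]

theorem intervalIntegrable_sub_rpow {θ : ℝ} (hθ : -1 < θ) (s a b : ℝ) :
    IntervalIntegrable (fun r => (s - r) ^ θ) volume a b := by
  simpa using (intervalIntegrable_rpow' hθ (a := s - a) (b := s - b)).comp_sub_left s

theorem hasDerivAt_sub_rpow_div {θ s x : ℝ} (hθ : θ ≠ 0) (hx : x < s) :
    HasDerivAt (fun r => -((s - r) ^ θ / θ)) ((s - x) ^ (θ - 1)) x := by
  refine (((hasDerivAt_id x).const_sub s).rpow_const (p := θ)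
    (Or.inl (sub_pos.2 hx).ne')).div_const θ |>.neg |>.congr_deriv ?_
  field_simp
  simp

theorem integrableOn_rpow_smul_comp_sub {θ : ℝ} (hθ : 0 < θ) {f : ℝ → E} (hf : Continuous f)
    (s : ℝ) :
    IntegrableOn (fun p : ℝ × ℝ => p.2 ^ (θ - 1) • f (p.1 - p.2)) (Ioc 0 s ×ˢ Ioc 0 s) := by
  obtain ⟨M, hM⟩ := (isCompact_Icc (a := -s) (b := s)).exists_bound_of_continuousOn hf.continuousOn
  have hker : IntegrableOn (fun ρ : ℝ => ρ ^ (θ - 1)) (Ioc 0 s) :=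
    (intervalIntegrable_iff.1 (intervalIntegrable_rpow' (by linarith))).mono_set Ioc_subset_uIoc
  have hbound : IntegrableOn (fun p : ℝ × ℝ => M * p.2 ^ (θ - 1)) (Ioc 0 s ×ˢ Ioc 0 s) := by
    rw [IntegrableOn, Measure.volume_eq_prod, ← Measure.prod_restrict]
    exact (integrable_const M).mul_prod hker
  refine hbound.mono' ?_ (ae_restrict_of_forall_mem (measurableSet_Ioc.prod measurableSet_Ioc)
    fun p hp => ?_)
  · exact (measurable_snd.pow_const _).aestronglyMeasurable.smul
      (hf.comp (continuous_fst.sub continuous_snd)).aestronglyMeasurable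
  · rw [norm_smul, Real.norm_of_nonneg (rpow_nonneg hp.2.1.le _), mul_comm]
    exact mul_le_mul_of_nonneg_right
      (hM _ ⟨by linarith [hp.1.1, hp.2.2], by linarith [hp.1.2, hp.2.1]⟩)
      (rpow_nonneg hp.2.1.le _)

theorem RLv_eq_integral_rpow_smul_sub (θ : ℝ) (f : ℝ → E) (s : ℝ) :
    RLv θ f s = (Gamma θ)⁻¹ • ∫ ρ in 0..s, ρ ^ (θ - 1) • f (s - ρ) := by
  have h := integral_comp_sub_left (fun ρ => ρ ^ (θ - 1) • f (s - ρ)) s (a := 0) (b := s)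
  simp only [sub_sub_cancel, sub_self, sub_zero] at h
  rw [RLv, h]

theorem continuous_RLv_add_one {θ : ℝ} (hθ : 0 < θ) {f : ℝ → E} (hf : Continuous f) :
    Continuous (RLv (θ + 1) f) := by
  refine ((continuous_const (y := (Gamma (θ + 1))⁻¹)).smul <|
    continuous_parametric_intervalIntegral_of_continuous
      (μ := volume) (a₀ := 0) (f := fun s r => (s - r) ^ θ • f r)
      (((continuous_fst.sub continuous_snd).rpow_const fun _ => Or.inr hθ.le).smul
        (hf.comp continuous_snd)) continuous_id).congr fun s => ?_
  rw [RLv, add_sub_cancel_right]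
  rfl

-- In the variables `(σ, ρ = σ - r)` the singular kernel depends on `ρ` alone.
theorem integral_RLv_eq_RLv_primitive {θ : ℝ} (hθ : 0 < θ) {f : ℝ → E} (hf : Continuous f)
    {s : ℝ} (hs : 0 ≤ s) :
    ∫ σ in 0..s, RLv θ f σ = RLv θ (fun x => ∫ r in 0..x, f r) s := by
  simp only [RLv_eq_integral_rpow_smul_sub, intervalIntegral.integral_smul]
  rw [integral_integral_swap_triangle (G := fun σ ρ => ρ ^ (θ - 1) • f (σ - ρ)) hs
    (integrableOn_rpow_smul_comp_sub hθ hf s)]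
  congr 1
  refine integral_congr fun ρ _ => ?_
  rw [intervalIntegral.integral_smul, integral_comp_sub_right (fun x => f x) ρ, sub_self]

variable [CompleteSpace E]

theorem RLv_eq_smul_add_RLv_deriv {θ : ℝ} (hθ : 0 < θ) {g : ℝ → E} (hg : ContDiff ℝ 1 g)
    {s : ℝ} (hs : 0 ≤ s) :
    RLv θ g s = (s ^ θ / Gamma (θ + 1)) • g 0 + RLv (θ + 1) (deriv g) s := by
  have hparts := integral_smul_deriv_eq_deriv_smul_of_hasDerivAt (a := 0) (b := s)
    (u := fun r => -((s - r) ^ θ / θ)) (v := g) (v' := deriv g)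
    (((continuous_const.sub continuous_id).rpow_const fun _ => Or.inr hθ.le).div_const
      θ).neg.continuousOn
    hg.continuous.continuousOn
    (fun x hx => hasDerivAt_sub_rpow_div hθ.ne' (by simpa [hs] using hx.2))
    (fun x _ => (hg.differentiable one_ne_zero x).hasDerivAt)
    (intervalIntegrable_sub_rpow (by linarith) s 0 s)
    ((hg.continuous_deriv le_rfl).intervalIntegrable _ _)
  have hsmul : ∫ r in 0..s, ((s - r) ^ θ / θ) • deriv g r
      = θ⁻¹ • ∫ r in 0..s, (s - r) ^ θ • deriv g r := by
    simp only [← intervalIntegral.integral_smul, smul_smul, div_eq_inv_mul]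
  simp only [sub_self, zero_rpow hθ.ne', zero_div, neg_zero, zero_smul, sub_zero, neg_smul,
    intervalIntegral.integral_neg, hsmul] at hparts
  rw [RLv, RLv, Gamma_add_one hθ.ne', add_sub_cancel_right]
  linear_combination (norm := module) (Gamma θ)⁻¹ • hparts

theorem continuousOn_RLv_s19 {θ : ℝ} (hθ : 0 < θ) {g : ℝ → E} (hg : ContDiff ℝ 1 g) :
    ContinuousOn (RLv θ g) (Ici 0) := by
  refine ContinuousOn.congr ?_ fun s hs => RLv_eq_smul_add_RLv_deriv hθ hg hs
  exact ((((continuous_id.rpow_const fun _ => Or.inr hθ.le).div_const _).smul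
    continuous_const).add (continuous_RLv_add_one hθ (hg.continuous_deriv le_rfl))).continuousOn

theorem integral_RLv {θ : ℝ} (hθ : 0 < θ) {f : ℝ → E} (hf : Continuous f) {s : ℝ}
    (hs : 0 ≤ s) : ∫ σ in 0..s, RLv θ f σ = RLv (θ + 1) f s := by
  have hderiv : deriv (fun x => ∫ r in 0..x, f r) = f := funext (hf.deriv_integral f 0)
  have hprim : ContDiff ℝ 1 (fun x => ∫ r in 0..x, f r) :=
    contDiff_one_iff_deriv.2
      ⟨fun x => (hf.integral_hasStrictDerivAt 0 x).hasDerivAt.differentiableAt, by rwa [hderiv]⟩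
  rw [integral_RLv_eq_RLv_primitive hθ hf hs, RLv_eq_smul_add_RLv_deriv hθ hprim hs, hderiv,
    integral_same, smul_zero, zero_add]

theorem hasDerivAt_RLv_add_one {θ : ℝ} (hθ : 0 < θ) {f : ℝ → E} (hf : ContDiff ℝ 1 f) {s : ℝ}
    (hs : 0 < s) : HasDerivAt (RLv (θ + 1) f) (RLv θ f s) s := by
  have hcont := continuousOn_RLv_s19 hθ hf
  have hprim : HasDerivAt (fun σ => ∫ τ in 0..σ, RLv θ f τ) (RLv θ f s) s :=
    integral_hasDerivAt_right
      ((hcont.mono (by rw [uIcc_of_le hs.le]; exact Icc_subset_Ici_self)).intervalIntegrable)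
      ((hcont.mono Ioi_subset_Ici_self).stronglyMeasurableAtFilter isOpen_Ioi s hs)
      (hcont.continuousAt (Ici_mem_nhds hs))
  exact hprim.congr_of_eventuallyEq <| Filter.eventually_of_mem (Ioi_mem_nhds hs)
    fun σ hσ => (integral_RLv hθ hf.continuous (le_of_lt hσ)).symm

theorem hasDerivAt_RLv_s19 {θ : ℝ} (hθ : 0 < θ) {g : ℝ → E} (hg : ContDiff ℝ 2 g) {s : ℝ}
    (hs : 0 < s) :
    HasDerivAt (RLv θ g) ((s ^ (θ - 1) / Gamma θ) • g 0 + RLv θ (deriv g) s) s := by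
  have hpow : HasDerivAt (fun σ => σ ^ θ / Gamma (θ + 1)) (θ * s ^ (θ - 1) / Gamma (θ + 1)) s :=
    (hasDerivAt_rpow_const (Or.inl hs.ne')).div_const _
  have hsum := (hpow.smul_const (g 0)).add (hasDerivAt_RLv_add_one hθ hg.deriv' hs)
  refine (hsum.congr_deriv ?_).congr_of_eventuallyEq <|
    Filter.eventually_of_mem (Ioi_mem_nhds hs)
      fun σ hσ => RLv_eq_smul_add_RLv_deriv hθ (hg.of_le one_le_two) (le_of_lt hσ)
  rw [Gamma_add_one hθ.ne', mul_div_mul_left _ _ hθ.ne']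

end RiemannLiouville

section Caputo

variable {E : Type*} [NormedAddCommGroup E] [NormedSpace ℝ E]

theorem capv_eq_RLv {α : ℝ} (hα : α ∈ Ioo 0 1) (w : ℝ → E) :
    capv α w = RLv (1 - α) (deriv w) := by
  have hceil : ⌈α⌉ = 1 := Int.ceil_eq_iff.2 ⟨by norm_num [hα.1], by norm_num [hα.2.le]⟩
  simp [capv, hceil, hα.2.ne]

theorem capv_one_add_eq_RLv {α : ℝ} (hα : α ∈ Ioo 0 1) (w : ℝ → E) :
    capv (1 + α) w = RLv (1 - α) (deriv (deriv w)) := by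
  have hceil : ⌈1 + α⌉ = 2 :=
    Int.ceil_eq_iff.2 ⟨by norm_num [hα.1], by norm_num; linarith [hα.2]⟩
  have hne : 1 + α ≠ 2 := by linarith [hα.2]
  simp [capv, hceil, hne]
  ring_nf

theorem hasDerivAt_capv [CompleteSpace E] {α : ℝ} (hα : α ∈ Ioo 0 1) {w : ℝ → E}
    (hw : ContDiff ℝ 3 w) {s : ℝ} (hs : 0 < s) :
    HasDerivAt (capv α w) ((s ^ (-α) / Gamma (1 - α)) • deriv w 0 + capv (1 + α) w s) s := by
  rw [capv_eq_RLv hα, capv_one_add_eq_RLv hα, ← sub_sub_cancel_left 1 α]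
  exact hasDerivAt_RLv_s19 (sub_pos.2 hα.2) hw.deriv' hs

end Caputo

theorem le_biSup_of_bddAbove_image {α ι : Type*} [ConditionallyCompleteLattice α] {S : Set ι}
    {f : ι → α} (hf : BddAbove (f '' S)) {x : ι} (hx : x ∈ S) : f x ≤ ⨆ y ∈ S, f y :=
  le_ciSup₂ (f := fun y (_ : y ∈ S) => f y) (hf.mono fun _ hy => by
    obtain ⟨y, hyS, rfl⟩ := by simpa only [mem_iUnion, mem_range] using hy
    exact mem_image_of_mem f hyS) x hx

theorem mul_biSup_sub_le_biSup {ι : Type*} {S : Set ι} {g G : ι → ℝ} {c K : ℝ} (hc : 0 < c)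
    (hS : S.Nonempty) (hg : ∀ x ∈ S, 0 ≤ g x) (hG : BddAbove (G '' S))
    (h : ∀ x ∈ S, 2 * c * g x - c * (⨆ y ∈ S, g y) - K ≤ G x) :
    c * (⨆ y ∈ S, g y) - K ≤ ⨆ y ∈ S, G y := by
  set A := ⨆ y ∈ S, g y
  set B := ⨆ y ∈ S, G y
  have hgx : ∀ x ∈ S, g x ≤ (B + c * A + K) / (2 * c) := fun x hx => by
    rw [le_div_iff₀ (by positivity)]
    linarith [h x hx, le_biSup_of_bddAbove_image hG hx]
  obtain ⟨x₀, hx₀⟩ := hS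
  have hbound : 0 ≤ (B + c * A + K) / (2 * c) := (hg x₀ hx₀).trans (hgx x₀ hx₀)
  have hA : A ≤ (B + c * A + K) / (2 * c) :=
    Real.iSup_le (fun x => Real.iSup_le (hgx x) hbound) hbound
  rw [le_div_iff₀ (by positivity)] at hA
  linarith

section Energy

open scoped RealInnerProductSpace

variable {F : Type*} [NormedAddCommGroup F] [InnerProductSpace ℝ F]

theorem norm_sq_div_two_sub_le_integral_inner {v D : ℝ → F} {c : F} {β t A : ℝ} (hβ : 0 < β)
    (ht : 0 < t) (hv : ContinuousOn v (Icc 0 t)) (hD : ContinuousOn D (Icc 0 t)) (hv0 : v 0 = 0)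
    (hderiv : ∀ s ∈ Ioo 0 t, HasDerivAt v ((s ^ (β - 1) / Gamma β) • c + D s) s)
    (hA : ∀ s ∈ Ioo 0 t, ‖v s‖ ^ 2 ≤ A) :
    ‖v t‖ ^ 2 / 2 - A / 4 - (‖c‖ * t ^ β / Gamma (β + 1)) ^ 2 ≤ ∫ s in 0..t, ⟪v s, D s⟫ := by
  have hIcc : uIcc 0 t = Icc 0 t := uIcc_of_le ht.le
  have hk : IntervalIntegrable (fun s => s ^ (β - 1) / Gamma β) volume 0 t :=
    (intervalIntegrable_rpow' (by linarith)).div_const _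
  have hint₁ : IntervalIntegrable (fun s => s ^ (β - 1) / Gamma β * ⟪v s, c⟫) volume 0 t :=
    hk.mul_continuousOn (hIcc ▸ hv.inner continuousOn_const)
  have hint₂ : IntervalIntegrable (fun s => ⟪v s, D s⟫) volume 0 t :=
    (hv.inner hD).intervalIntegrable_of_Icc ht.le
  have henergy : ‖v t‖ ^ 2
      = ∫ s in 0..t, 2 * (s ^ (β - 1) / Gamma β * ⟪v s, c⟫ + ⟪v s, D s⟫) := by
    rw [integral_eq_sub_of_hasDerivAt_of_le ht.le (hv.norm.pow 2)
      (fun s hs => (hderiv s hs).norm_sq.congr_deriv ?_) ((hint₁.add hint₂).const_mul 2)]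
    · simp [hv0]
    · rw [inner_add_right, real_inner_smul_right]
  have hA0 : 0 ≤ A := (sq_nonneg _).trans (hA (t / 2) ⟨half_pos ht, half_lt_self ht⟩)
  have hsqrt : ∀ s ∈ Ioo 0 t, ‖v s‖ ≤ √A := fun s hs => Real.le_sqrt_of_sq_le (hA s hs)
  have herror : ∫ s in 0..t, s ^ (β - 1) / Gamma β * ⟪v s, c⟫
      ≤ √A * (‖c‖ * t ^ β / Gamma (β + 1)) := by
    calc ∫ s in 0..t, s ^ (β - 1) / Gamma β * ⟪v s, c⟫
        ≤ ∫ s in 0..t, s ^ (β - 1) / Gamma β * (√A * ‖c‖) :=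
          integral_mono_on_of_le_Ioo ht.le hint₁ (hk.mul_const _) fun s hs =>
            mul_le_mul_of_nonneg_left ((real_inner_le_norm _ _).trans
              (mul_le_mul_of_nonneg_right (hsqrt s hs) (norm_nonneg _)))
              (div_nonneg (rpow_nonneg hs.1.le _) (Gamma_pos_of_pos hβ).le)
      _ = √A * (‖c‖ * t ^ β / Gamma (β + 1)) := by
          rw [intervalIntegral.integral_mul_const, intervalIntegral.integral_div,
            integral_rpow (Or.inl (by linarith)), sub_add_cancel, zero_rpow hβ.ne',
            Gamma_add_one hβ.ne']
          field_simp
          ring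
  have hyoung : √A * (‖c‖ * t ^ β / Gamma (β + 1)) ≤ A / 4 + (‖c‖ * t ^ β / Gamma (β + 1)) ^ 2 := by
    nlinarith [sq_nonneg (√A / 2 - ‖c‖ * t ^ β / Gamma (β + 1)), Real.sq_sqrt hA0]
  rw [intervalIntegral.integral_const_mul, intervalIntegral.integral_add hint₁ hint₂] at henergy
  linarith

theorem mul_biSup_norm_sq_sub_le_biSup_integral_inner {v D : ℝ → F} {c : F} {β b t : ℝ}
    (hβ : 0 < β) (hb : 0 < b) (ht : 0 < t) (hv : ContinuousOn v (Icc 0 t))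
    (hD : ContinuousOn D (Icc 0 t)) (hv0 : v 0 = 0)
    (hderiv : ∀ s ∈ Ioo 0 t, HasDerivAt v ((s ^ (β - 1) / Gamma β) • c + D s) s) :
    b / 4 * (⨆ s ∈ Ioo 0 t, ‖v s‖ ^ 2) - b * (‖c‖ * t ^ β / Gamma (β + 1)) ^ 2
      ≤ ⨆ t' ∈ Ioo 0 t, ∫ s in 0..t', ⟪b • v s, D s⟫ := by
  have hIcc : uIcc 0 t = Icc 0 t := uIcc_of_le ht.le
  have hvbdd : BddAbove ((fun s => ‖v s‖ ^ 2) '' Ioo 0 t) :=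
    (isCompact_Icc.bddAbove_image (hv.norm.pow 2)).mono (image_mono Ioo_subset_Icc_self)
  have hFbdd : BddAbove ((fun t' => ∫ s in 0..t', ⟪b • v s, D s⟫) '' Ioo 0 t) := by
    refine (isCompact_Icc.bddAbove_image ?_).mono (image_mono Ioo_subset_Icc_self)
    rw [← hIcc]
    exact continuousOn_primitive_interval
      (((hv.const_smul b).inner hD).integrableOn_compact isCompact_Icc |>.mono_set hIcc.subset)
  refine mul_biSup_sub_le_biSup (by positivity) ⟨t / 2, half_pos ht, half_lt_self ht⟩
    (fun _ _ => sq_nonneg _) hFbdd fun t' ht' => ?_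
  have hsub : Icc 0 t' ⊆ Icc 0 t := Icc_subset_Icc_right ht'.2.le
  have hbound := norm_sq_div_two_sub_le_integral_inner hβ ht'.1 (hv.mono hsub) (hD.mono hsub) hv0
    (fun s hs => hderiv s ⟨hs.1, hs.2.trans ht'.2⟩)
    (fun s hs => le_biSup_of_bddAbove_image hvbdd ⟨hs.1, hs.2.trans ht'.2⟩)
  have hmono : (‖c‖ * t' ^ β / Gamma (β + 1)) ^ 2 ≤ (‖c‖ * t ^ β / Gamma (β + 1)) ^ 2 := by
    have hΓ := Gamma_pos_of_pos (add_pos hβ one_pos)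
    have := rpow_le_rpow ht'.1.le ht'.2.le hβ.le
    have := rpow_nonneg ht'.1.le β
    gcongr
  simp only [real_inner_smul_left, intervalIntegral.integral_const_mul]
  nlinarith [mul_le_mul_of_nonneg_left hbound hb.le, mul_le_mul_of_nonneg_left hmono hb.le]

end Energy

open scoped RealInnerProductSpace in
theorem damping_term_lower_bound_general {H : Type*} [NormedAddCommGroup H]
    [InnerProductSpace ℝ H] [CompleteSpace H]
    (b α t : ℝ) (hb : 0 < b) (hα : α ∈ Set.Ioo (0:ℝ) 1) (ht : 0 < t)
    (S : H →L[ℝ] H) (u : ℝ → H) (hu : ContDiff ℝ 3 u) :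
    (b/4) * (⨆ s ∈ Set.Ioo (0:ℝ) t, ‖capv α (fun σ => S (u σ)) s‖^2)
        - t^(2*(1-α)) * b * ‖S (deriv u 0)‖^2 / (Real.Gamma (2-α))^2 ≤
      ⨆ t' ∈ Set.Ioo (0:ℝ) t, ∫ s in (0:ℝ)..t',
        ⟪b • capv α (fun σ => S (u σ)) s, capv (1+α) (fun σ => S (u σ)) s⟫ := by
  set w : ℝ → H := fun σ => S (u σ)
  have hw : ContDiff ℝ 3 w := S.contDiff.comp hu
  have hβ : 0 < 1 - α := sub_pos.2 hα.2
  have hw0 : deriv w 0 = S (deriv u 0) :=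
    (S.hasFDerivAt.comp_hasDerivAt 0 (hu.differentiable (by norm_num) 0).hasDerivAt).deriv
  have hv : ContinuousOn (capv α w) (Icc 0 t) := by
    rw [capv_eq_RLv hα]
    exact (continuousOn_RLv_s19 hβ (hw.of_le (by norm_num)).deriv').mono Icc_subset_Ici_self
  have hD : ContinuousOn (capv (1 + α) w) (Icc 0 t) := by
    rw [capv_one_add_eq_RLv hα]
    exact (continuousOn_RLv_s19 hβ hw.deriv'.deriv').mono Icc_subset_Ici_self
  have hv0 : capv α w 0 = 0 := by simp [capv_eq_RLv hα, RLv]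
  have key := mul_biSup_norm_sq_sub_le_biSup_integral_inner hβ hb ht hv hD hv0 fun s hs => by
    rw [sub_sub_cancel_left]
    exact hasDerivAt_capv hα hw hs.1
  convert key using 3
  rw [hw0, show 1 - α + 1 = 2 - α by ring, mul_comm 2, rpow_mul ht.le, rpow_two]
  ring

open scoped RealInnerProductSpace in
/-- Lower bound for the `k_* = K` damping term: for `b > 0`, `α ∈ (0,1)` and `u` with
`∂_t^α Ã^{1/2}u(0) = 0`,
`sup_{t'∈(0,t)} ∫₀^{t'} ⟨b ∂_s^α Ã^{1/2}u, ∂_s^{1+α} Ã^{1/2}u⟩ ds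
 ≥ (b/4) sup_{s∈(0,t)} ‖∂_s^α Ã^{1/2}u(s)‖² − t^{2(1-α)} b ‖Ã^{1/2}u'(0)‖²/Γ(2-α)²`. -/
theorem damping_term_lower_bound {H : Type*} [NormedAddCommGroup H]
    [InnerProductSpace ℝ H] [CompleteSpace H]
    (b α t : ℝ) (hb : 0 < b) (hα : α ∈ Set.Ioo (0:ℝ) 1) (ht : 0 < t)
    (S : H →L[ℝ] H) (u : ℝ → H) (hu : ContDiff ℝ 3 u)
    (h0 : capv α (fun s => S (u s)) 0 = 0) :
    (b/4) * (⨆ s ∈ Set.Ioo (0:ℝ) t, ‖capv α (fun σ => S (u σ)) s‖^2)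
        - t^(2*(1-α)) * b * ‖S (deriv u 0)‖^2 / (Real.Gamma (2-α))^2 ≤
      ⨆ t' ∈ Set.Ioo (0:ℝ) t, ∫ s in (0:ℝ)..t',
        ⟪b • capv α (fun σ => S (u σ)) s, capv (1+α) (fun σ => S (u σ)) s⟫ :=
  damping_term_lower_bound_general b α t hb hα ht S u hu
end
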